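/- Let t be odd, n = k₀+k₁+k₂+k₃ with 0 ≤ kᵢ ≤ (t-1)/2 satisfying Σᵢ kᵢ(t-kᵢ)/2 = t(t-1)/2, and suppose n ≡ 2 (mod 4). Then ⌈2(t-√(t-1))⌉ ≤ n ≤ ⌊2(t+√(t-1))⌋. -/

import Mathlib

/-!
Expanding the constraint gives `t n - Σ kᵢ² = t (t - 1)`, and Cauchy–Schwarz `n² ≤ 4 Σ kᵢ²` turns
it into `(n - 2t)² ≤ 4t`. When `n ≡ 2 (mod 4)` and `t` is odd, `n - 2t` is divisible by `4`, so
`(n - 2t)² / 4` is an even square while `t` is odd; hence `(n - 2t)² ≤ 4(t - 1)`, i.e.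
`|n - 2t| ≤ 2 √(t - 1)`.
-/

lemma Int.even_mul_sub_of_odd {t : ℤ} (ht : Odd t) (k : ℤ) : Even (k * (t - k)) := by
  rcases Int.even_or_odd k with hk | hk
  · exact hk.mul_right _
  · exact (ht.sub_odd hk).mul_left _

lemma Int.sum_mul_sub_eq_of_sum_halves {t k₀ k₁ k₂ k₃ : ℤ} (ht : Odd t)
    (h : k₀ * (t - k₀) / 2 + k₁ * (t - k₁) / 2 + k₂ * (t - k₂) / 2 + k₃ * (t - k₃) / 2 =
      t * (t - 1) / 2) :
    k₀ * (t - k₀) + k₁ * (t - k₁) + k₂ * (t - k₂) + k₃ * (t - k₃) = t * (t - 1) := by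
  have e₀ := (Int.even_mul_sub_of_odd ht k₀).two_dvd
  have e₁ := (Int.even_mul_sub_of_odd ht k₁).two_dvd
  have e₂ := (Int.even_mul_sub_of_odd ht k₂).two_dvd
  have e₃ := (Int.even_mul_sub_of_odd ht k₃).two_dvd
  have e := (Int.even_mul_pred_self t).two_dvd
  omega

lemma sq_add_add_add_le_four_mul {R : Type*} [CommRing R] [LinearOrder R] [IsStrictOrderedRing R]
    (a b c d : R) : (a + b + c + d) ^ 2 ≤ 4 * (a ^ 2 + b ^ 2 + c ^ 2 + d ^ 2) := by
  nlinarith [sq_nonneg (a - b), sq_nonneg (a - c), sq_nonneg (a - d),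
    sq_nonneg (b - c), sq_nonneg (b - d), sq_nonneg (c - d)]

lemma sq_sum_sub_two_mul_le_of_sum_mul_sub_eq {R : Type*} [CommRing R] [LinearOrder R]
    [IsStrictOrderedRing R] {t a b c d : R}
    (h : a * (t - a) + b * (t - b) + c * (t - c) + d * (t - d) = t * (t - 1)) :
    (a + b + c + d - 2 * t) ^ 2 ≤ 4 * t := by
  nlinarith [sq_add_add_add_le_four_mul a b c d]

lemma Int.sq_le_four_mul_sub_one_of_four_dvd {d t : ℤ} (ht : Odd t) (hd : 4 ∣ d)
    (h : d ^ 2 ≤ 4 * t) : d ^ 2 ≤ 4 * (t - 1) := by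
  obtain ⟨m, rfl⟩ := hd
  obtain ⟨s, rfl⟩ := ht
  have hle : 4 * (m * m) ≤ 2 * s + 1 := by nlinarith
  have hlt : 4 * (m * m) ≤ 2 * s := by omega
  nlinarith

lemma Real.abs_sub_le_two_mul_sqrt {x c s : ℝ} (h : (x - c) ^ 2 ≤ 4 * s) :
    |x - c| ≤ 2 * √s := by
  calc |x - c| ≤ √(4 * s) := Real.abs_le_sqrt h
    _ = 2 * √s := by
      rw [Real.sqrt_mul zero_le_four, show (4 : ℝ) = 2 ^ 2 by norm_num,
        Real.sqrt_sq zero_le_two]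

theorem total_coboundaries_bounds_mod_two_general (t : ℤ) (ht : Odd t)
    (k₀ k₁ k₂ k₃ : ℤ)
    (hdist : k₀ * (t - k₀) / 2 + k₁ * (t - k₁) / 2 + k₂ * (t - k₂) / 2 + k₃ * (t - k₃) / 2 =
      t * (t - 1) / 2)
    (n : ℤ) (hn : n = k₀ + k₁ + k₂ + k₃) (hmod : n % 4 = 2) :
    ⌈(2 * ((t : ℝ) - Real.sqrt (t - 1)) : ℝ)⌉ ≤ n ∧
    n ≤ ⌊(2 * ((t : ℝ) + Real.sqrt (t - 1)) : ℝ)⌋ := by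
  have hsq : (n - 2 * t) ^ 2 ≤ 4 * t :=
    hn ▸ sq_sum_sub_two_mul_le_of_sum_mul_sub_eq (Int.sum_mul_sub_eq_of_sum_halves ht hdist)
  have h4 : 4 ∣ n - 2 * t := by
    obtain ⟨s, rfl⟩ := ht
    omega
  have hsq' : ((n : ℝ) - 2 * t) ^ 2 ≤ 4 * ((t : ℝ) - 1) := by
    exact_mod_cast Int.sq_le_four_mul_sub_one_of_four_dvd ht h4 hsq
  obtain ⟨hlo, hhi⟩ := abs_le.mp (Real.abs_sub_le_two_mul_sqrt hsq')
  exact ⟨Int.ceil_le.mpr (by linarith), Int.le_floor.mpr (by linarith)⟩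

theorem total_coboundaries_bounds_mod_two (t : ℤ) (ht : Odd t) (ht3 : 3 ≤ t)
    (k₀ k₁ k₂ k₃ : ℤ)
    (h0 : 0 ≤ k₀ ∧ k₀ ≤ (t - 1) / 2) (h1 : 0 ≤ k₁ ∧ k₁ ≤ (t - 1) / 2)
    (h2 : 0 ≤ k₂ ∧ k₂ ≤ (t - 1) / 2) (h3 : 0 ≤ k₃ ∧ k₃ ≤ (t - 1) / 2)
    (hdist : k₀ * (t - k₀) / 2 + k₁ * (t - k₁) / 2 + k₂ * (t - k₂) / 2 + k₃ * (t - k₃) / 2 =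
      t * (t - 1) / 2)
    (n : ℤ) (hn : n = k₀ + k₁ + k₂ + k₃) (hmod : n % 4 = 2) :
    ⌈(2 * ((t : ℝ) - Real.sqrt (t - 1)) : ℝ)⌉ ≤ n ∧
    n ≤ ⌊(2 * ((t : ℝ) + Real.sqrt (t - 1)) : ℝ)⌋ :=
  total_coboundaries_bounds_mod_two_general t ht k₀ k₁ k₂ k₃ hdist n hn hmod
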